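/- arXiv:2104.11713 — 2 statements merged into one kernel-verified Lean document; each statement's English description precedes it below -/
import Mathlib

section
/- The map T : μ₂ × μ_{2(n-1)} × ℂ* → (ℂ*)^5 given by T(s, σ, τ) = (s σ^{-2} τ^{-2(k+1)}, σ τ^{kn+1}, s σ τ^{kn+1}, σ^2 τ^{2k}, τ^2) is a group homomorphism onto the group Γ_w = {(t0,…,t4) : t0 t1 t2 t3 t4 = t1^2 = t2^2 = t3^n t4 = t3 t4^{k(n-1)+1}}, and its kernel has order 2, namely {(1, τ^{-kn-1}, τ) : τ^2 = 1}. -/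
/-!
Write `u = CanT n k s σ τ`. Then `u 2 = s * u 1`, `u 4 = τ²`, and every expression in the
definition of `Γ_w` is `u 1 ^ 2` up to a factor `s²` or `σ^{2(n-1)}`:
`u₀u₁u₂u₃u₄ = s² u₁²`, `u₃ u₄^{k(n-1)+1} = u₁²` and `u₃ⁿ u₄ = σ^{2(n-1)} u₁²`.
So the relations of `Γ_w` on `u` say precisely `s² = 1` and `σ^{2(n-1)} = 1`. Conversely a point
`t ∈ Γ_w` is determined by `t₁, t₂, t₄`, and `τ² = t₄`, `σ = t₁ τ^{-(kn+1)}`, `s = t₂ / t₁` is a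
preimage; the preimages of `1` are then parametrized by `τ ∈ μ₂`.
-/

/-- The map `T(s, σ, τ) = (s σ⁻² τ^{-2(k+1)}, σ τ^{kn+1}, s σ τ^{kn+1}, σ² τ^{2k}, τ²)`
for `w = x₁² + x₂² + x₃x₄(x₃^{n-1} + x₄^{k(n-1)})`. -/
noncomputable def CanT (n k : ℕ) (s σ τ : ℂˣ) : Fin 5 → ℂˣ :=
  ![s * σ ^ (-2 : ℤ) * τ ^ (-(2 * (k : ℤ) + 2)), σ * τ ^ (k * n + 1),
    s * σ * τ ^ (k * n + 1), σ ^ 2 * τ ^ (2 * k), τ ^ 2]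

/-- The group `Γ_w` for `w = x₁² + x₂² + x₃x₄(x₃^{n-1} + x₄^{k(n-1)})`. -/
def CanGamma (n k : ℕ) : Set (Fin 5 → ℂˣ) :=
  {t | t 0 * t 1 * t 2 * t 3 * t 4 = t 1 ^ 2 ∧
       t 1 ^ 2 = t 2 ^ 2 ∧
       t 2 ^ 2 = t 3 ^ n * t 4 ∧
       t 3 ^ n * t 4 = t 3 * t 4 ^ (k * (n - 1) + 1)}

lemma IsAlgClosed.exists_units_pow_nat_eq {K : Type*} [Field K] [IsAlgClosed K] (x : Kˣ) {m : ℕ} (hm : 0 < m) :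
    ∃ y : Kˣ, y ^ m = x := by
  obtain ⟨z, hz⟩ := IsAlgClosed.exists_pow_nat_eq (x : K) hm
  have hz0 : z ≠ 0 := by
    rintro rfl
    exact x.ne_zero (by rw [← hz, zero_pow hm.ne'])
  exact ⟨Units.mk0 z hz0, Units.ext (by simpa using hz)⟩

lemma Complex.ncard_setOf_units_sq_eq_one : {τ : ℂˣ | τ ^ 2 = 1}.ncard = 2 := by
  rw [← Nat.card_coe_set_eq]
  exact Complex.card_rootsOfUnity 2

namespace CanGamma

variable {n k : ℕ} {t u : Fin 5 → ℂˣ}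

lemma mem_iff :
    t ∈ CanGamma n k ↔
      t 0 * t 1 * t 2 * t 3 * t 4 = t 1 ^ 2 ∧ t 2 ^ 2 = t 1 ^ 2 ∧
      t 3 ^ n * t 4 = t 1 ^ 2 ∧ t 3 * t 4 ^ (k * (n - 1) + 1) = t 1 ^ 2 := by
  constructor
  · rintro ⟨h01, h12, h23, h34⟩
    exact ⟨h01, h12.symm, h23.symm.trans h12.symm, h34.symm.trans (h23.symm.trans h12.symm)⟩
  · rintro ⟨h0, h2, h3, h3'⟩
    exact ⟨h0, h2.symm, h2.trans h3.symm, h3.trans h3'.symm⟩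

lemma one_mem : (1 : Fin 5 → ℂˣ) ∈ CanGamma n k :=
  mem_iff.mpr (by simp)

lemma eq_of_apply_one_two_four (ht : t ∈ CanGamma n k)
    (hu0 : u 0 * u 1 * u 2 * u 3 * u 4 = u 1 ^ 2)
    (hu3 : u 3 * u 4 ^ (k * (n - 1) + 1) = u 1 ^ 2)
    (h1 : u 1 = t 1) (h2 : u 2 = t 2) (h4 : u 4 = t 4) : u = t := by
  obtain ⟨ht0, -, -, ht3⟩ := mem_iff.mp ht
  have h3 : u 3 = t 3 := mul_right_cancel (b := t 4 ^ (k * (n - 1) + 1)) <| by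
    rw [← h4, hu3, h4, h1, ht3]
  have h0 : u 0 = t 0 := mul_right_cancel (b := t 1 * t 2 * t 3 * t 4) <| by
    simp only [← mul_assoc]
    rw [← h1, ← h2, ← h3, ← h4, hu0, h1, h2, h3, h4, ht0]
  ext i : 1
  fin_cases i
  exacts [h0, h1, h2, h3, h4]

end CanGamma

namespace CanT

variable {n k : ℕ} {s σ τ : ℂˣ}

@[simp] lemma apply_zero : CanT n k s σ τ 0 = s * σ ^ (-2 : ℤ) * τ ^ (-(2 * (k : ℤ) + 2)) := rfl

@[simp] lemma apply_one : CanT n k s σ τ 1 = σ * τ ^ (k * n + 1) := rfl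

@[simp] lemma apply_two : CanT n k s σ τ 2 = s * σ * τ ^ (k * n + 1) := rfl

@[simp] lemma apply_three : CanT n k s σ τ 3 = σ ^ 2 * τ ^ (2 * k) := rfl

@[simp] lemma apply_four : CanT n k s σ τ 4 = τ ^ 2 := rfl

lemma map_mul (s σ τ s' σ' τ' : ℂˣ) :
    CanT n k (s * s') (σ * σ') (τ * τ') = CanT n k s σ τ * CanT n k s' σ' τ' := by
  ext i : 1
  fin_cases i <;> simp [CanT, mul_zpow, mul_pow] <;> ac_rfl

lemma apply_two_eq_mul_apply_one : CanT n k s σ τ 2 = s * CanT n k s σ τ 1 := by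
  simp [mul_assoc]

lemma prod_eq : CanT n k s σ τ 0 * CanT n k s σ τ 1 * CanT n k s σ τ 2 * CanT n k s σ τ 3 *
    CanT n k s σ τ 4 = s ^ 2 * CanT n k s σ τ 1 ^ 2 := by
  have hexp : -(2 * (k : ℤ) + 2) = -((2 * k + 2 : ℕ) : ℤ) := by push_cast; rfl
  simp only [apply_zero, apply_one, apply_two, apply_three, apply_four, hexp, zpow_neg,
    zpow_natCast]
  apply Units.ext
  push_cast
  field_simp
  ring

lemma apply_three_mul_apply_four_pow (hn : 1 ≤ n) :
    CanT n k s σ τ 3 * CanT n k s σ τ 4 ^ (k * (n - 1) + 1) = CanT n k s σ τ 1 ^ 2 := by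
  obtain ⟨m, rfl⟩ := Nat.exists_eq_add_of_le' hn
  simp only [apply_one, apply_three, apply_four, Nat.add_sub_cancel]
  apply Units.ext
  push_cast
  ring

lemma apply_three_pow_mul_apply_four (hn : 1 ≤ n) :
    CanT n k s σ τ 3 ^ n * CanT n k s σ τ 4 = σ ^ (2 * (n - 1)) * CanT n k s σ τ 1 ^ 2 := by
  obtain ⟨m, rfl⟩ := Nat.exists_eq_add_of_le' hn
  simp only [apply_one, apply_three, apply_four, Nat.add_sub_cancel]
  apply Units.ext
  push_cast
  ring

lemma mem_CanGamma_iff (hn : 1 ≤ n) :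
    CanT n k s σ τ ∈ CanGamma n k ↔ s ^ 2 = 1 ∧ σ ^ (2 * (n - 1)) = 1 := by
  rw [CanGamma.mem_iff, prod_eq, apply_two_eq_mul_apply_one, apply_three_pow_mul_apply_four hn,
    apply_three_mul_apply_four_pow hn, mul_pow]
  simp only [mul_eq_right, and_true, and_self_left]

lemma apply_one_eq_iff (t : ℂˣ) : CanT n k s σ τ 1 = t ↔ σ = t * τ ^ (-((k : ℤ) * n + 1)) := by
  have hexp : -((k : ℤ) * n + 1) = -((k * n + 1 : ℕ) : ℤ) := by push_cast; rfl
  rw [apply_one, hexp, zpow_neg, zpow_natCast, eq_mul_inv_iff_mul_eq]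

lemma exists_eq_of_mem_CanGamma (hn : 1 ≤ n) {t : Fin 5 → ℂˣ} (ht : t ∈ CanGamma n k) :
    ∃ s σ τ : ℂˣ, CanT n k s σ τ = t := by
  obtain ⟨τ, hτ⟩ := IsAlgClosed.exists_units_pow_nat_eq (t 4) two_pos
  set σ := t 1 * τ ^ (-((k : ℤ) * n + 1))
  have h1 : CanT n k (t 2 * (t 1)⁻¹) σ τ 1 = t 1 := (apply_one_eq_iff _).mpr rfl
  refine ⟨_, σ, τ, CanGamma.eq_of_apply_one_two_four ht ?_ (apply_three_mul_apply_four_pow hn)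
    h1 ?_ hτ⟩
  · have hs : (t 2 * (t 1)⁻¹) ^ 2 = 1 := by
      rw [mul_pow, (CanGamma.mem_iff.mp ht).2.1, inv_pow, mul_inv_cancel]
    rw [prod_eq, hs, one_mul]
  · rw [apply_two_eq_mul_apply_one, h1, inv_mul_cancel_right]

lemma eq_one_iff (hn : 1 ≤ n) :
    CanT n k s σ τ = 1 ↔ s = 1 ∧ σ = τ ^ (-((k : ℤ) * n + 1)) ∧ τ ^ 2 = 1 := by
  constructor
  · intro h
    have h1 : CanT n k s σ τ 1 = 1 := congrFun h 1
    have h2 : s * CanT n k s σ τ 1 = 1 := apply_two_eq_mul_apply_one.symm.trans (congrFun h 2)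
    rw [h1, mul_one] at h2
    exact ⟨h2, by simpa using (apply_one_eq_iff 1).mp h1, congrFun h 4⟩
  · rintro ⟨rfl, rfl, hτ⟩
    have h1 : CanT n k 1 (τ ^ (-((k : ℤ) * n + 1))) τ 1 = 1 :=
      (apply_one_eq_iff 1).mpr (one_mul _).symm
    refine CanGamma.eq_of_apply_one_two_four CanGamma.one_mem ?_
      (apply_three_mul_apply_four_pow hn) h1 ?_ hτ
    · rw [prod_eq, one_pow, one_mul, h1, one_pow]
    · rw [apply_two_eq_mul_apply_one, h1, one_mul, Pi.one_apply]

lemma ker_eq_image (hn : 1 ≤ n) :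
    {p : ℂˣ × ℂˣ × ℂˣ | p.1 ^ 2 = 1 ∧ p.2.1 ^ (2 * (n - 1)) = 1 ∧
      CanT n k p.1 p.2.1 p.2.2 = 1} =
      (fun τ ↦ ((1 : ℂˣ), τ ^ (-((k : ℤ) * n + 1)), τ)) '' {τ : ℂˣ | τ ^ 2 = 1} := by
  ext ⟨s, σ, τ⟩
  simp only [Set.mem_ofPred_eq, Set.mem_image, Prod.mk.injEq]
  constructor
  · rintro ⟨-, -, h⟩
    obtain ⟨rfl, rfl, hτ⟩ := (eq_one_iff hn).mp h
    exact ⟨τ, hτ, rfl, rfl, rfl⟩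
  · rintro ⟨τ, hτ, rfl, rfl, rfl⟩
    have h := (eq_one_iff (k := k) hn).mpr ⟨rfl, rfl, hτ⟩
    obtain ⟨hs, hσ⟩ := (mem_CanGamma_iff hn).mp (h ▸ CanGamma.one_mem)
    exact ⟨hs, hσ, h⟩

end CanT

theorem can_T_surjective_two_to_one_general (n k : ℕ) (hn : 2 ≤ n) :
    (∀ s σ τ s' σ' τ' : ℂˣ,
        CanT n k (s * s') (σ * σ') (τ * τ') = CanT n k s σ τ * CanT n k s' σ' τ') ∧
    (∀ s σ τ : ℂˣ, s ^ 2 = 1 → σ ^ (2 * (n - 1)) = 1 → CanT n k s σ τ ∈ CanGamma n k) ∧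
    (∀ t ∈ CanGamma n k, ∃ s σ τ : ℂˣ, s ^ 2 = 1 ∧ σ ^ (2 * (n - 1)) = 1 ∧
        CanT n k s σ τ = t) ∧
    {p : ℂˣ × ℂˣ × ℂˣ | p.1 ^ 2 = 1 ∧ p.2.1 ^ (2 * (n - 1)) = 1 ∧
        CanT n k p.1 p.2.1 p.2.2 = 1} =
      {p : ℂˣ × ℂˣ × ℂˣ | ∃ τ : ℂˣ, τ ^ 2 = 1 ∧
        p = (1, τ ^ (-((k : ℤ) * n + 1)), τ)} ∧
    {p : ℂˣ × ℂˣ × ℂˣ | p.1 ^ 2 = 1 ∧ p.2.1 ^ (2 * (n - 1)) = 1 ∧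
        CanT n k p.1 p.2.1 p.2.2 = 1}.ncard = 2 := by
  have hn₁ : 1 ≤ n := by omega
  refine ⟨CanT.map_mul, fun s σ τ hs hσ ↦ (CanT.mem_CanGamma_iff hn₁).mpr ⟨hs, hσ⟩,
    fun t ht ↦ ?_, ?_, ?_⟩
  · obtain ⟨s, σ, τ, rfl⟩ := CanT.exists_eq_of_mem_CanGamma hn₁ ht
    obtain ⟨hs, hσ⟩ := (CanT.mem_CanGamma_iff hn₁).mp ht
    exact ⟨s, σ, τ, hs, hσ, rfl⟩
  · rw [CanT.ker_eq_image hn₁]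
    ext p
    simp [eq_comm]
  · rw [CanT.ker_eq_image hn₁, Set.ncard_image_of_injective _ fun _ _ h ↦ congrArg (·.2.2) h]
    exact Complex.ncard_setOf_units_sq_eq_one

/-- `T : μ₂ × μ_{2(n-1)} × ℂ* → (ℂ*)⁵` is a group homomorphism onto `Γ_w`, with kernel
`{(1, τ^{-kn-1}, τ) : τ² = 1}` of order 2. -/
theorem can_T_surjective_two_to_one (n k : ℕ) (hn : 2 ≤ n) (hk : 1 ≤ k) :
    (∀ s σ τ s' σ' τ' : ℂˣ,
        CanT n k (s * s') (σ * σ') (τ * τ') = CanT n k s σ τ * CanT n k s' σ' τ') ∧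
    (∀ s σ τ : ℂˣ, s ^ 2 = 1 → σ ^ (2 * (n - 1)) = 1 → CanT n k s σ τ ∈ CanGamma n k) ∧
    (∀ t ∈ CanGamma n k, ∃ s σ τ : ℂˣ, s ^ 2 = 1 ∧ σ ^ (2 * (n - 1)) = 1 ∧
        CanT n k s σ τ = t) ∧
    {p : ℂˣ × ℂˣ × ℂˣ | p.1 ^ 2 = 1 ∧ p.2.1 ^ (2 * (n - 1)) = 1 ∧
        CanT n k p.1 p.2.1 p.2.2 = 1} =
      {p : ℂˣ × ℂˣ × ℂˣ | ∃ τ : ℂˣ, τ ^ 2 = 1 ∧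
        p = (1, τ ^ (-((k : ℤ) * n + 1)), τ)} ∧
    {p : ℂˣ × ℂˣ × ℂˣ | p.1 ^ 2 = 1 ∧ p.2.1 ^ (2 * (n - 1)) = 1 ∧
        CanT n k p.1 p.2.1 p.2.2 = 1}.ncard = 2 :=
  can_T_surjective_two_to_one_general n k hn
end

section
/- Let k ≥ 1. Suppose s ∈ {±1}, μ ∈ μ₃, τ ∈ μ_{12k+6} and s μ^{-1} τ^{-(4k+4)} = 1 (i.e. the element T(s,μ,τ) fixes the variable x_0 in the Laufer example). Then τ^6 = 1 and s = 1, and either τ^3 = 1 (in which case all of τ^3, μτ^{4k+1}, τ^{6k+3}, sτ^{6k+3} equal 1, so all variables are fixed) or τ^3 = −1 (in which case none of τ^3, μτ^{4k+1}, τ^{6k+3}, sτ^{6k+3} equals 1). -/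
/-! Cubing `τ^(4k+4) = s μ⁻¹` kills `μ` and, since `3(4k+4) = (12k+6) + 6`, gives `τ⁶ = s`. Then
`s^(2k+1) = τ^(12k+6) = 1` together with `s² = 1` forces `s = 1`, so `τ³ = ±1`. Finally
`μ τ^(4k+1) = τ^{-3} = τ³` and `τ^(6k+3) = (τ³)^(2k+1)` with `2k+1` odd, so all four quantities
equal `τ³`. -/

theorem eq_one_of_sq_eq_one_of_pow_eq_one_of_odd {M : Type*} [Monoid M] {x : M} {n : ℕ}
    (hn : Odd n) (h2 : x ^ 2 = 1) (hx : x ^ n = 1) : x = 1 := by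
  simpa [Nat.coprime_two_left.mpr hn] using pow_gcd_eq_one.mpr ⟨h2, hx⟩

theorem Units.eq_one_or_eq_neg_one_of_sq_eq_one {R : Type*} [Ring R] [NoZeroDivisors R]
    {u : Rˣ} (h : u ^ 2 = 1) : u = 1 ∨ u = -1 := by
  have hval : (u : R) ^ 2 = 1 := by rw [← Units.val_pow_eq_pow_val, h, Units.val_one]
  exact (sq_eq_one_iff.mp hval).imp Units.val_eq_one.mp Units.val_eq_neg_one.mp

section CommGroup

variable {G : Type*} [CommGroup G] {s μ τ : G}

theorem pow_six_eq_of_pow_four_mul_add_four_eq {k : ℕ} (hs : s ^ 2 = 1) (hμ : μ ^ 3 = 1)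
    (hτ : τ ^ (12 * k + 6) = 1) (h : τ ^ (4 * k + 4) = s * μ⁻¹) : τ ^ 6 = s :=
  calc τ ^ 6 = τ ^ (12 * k + 6) * τ ^ 6 := by rw [hτ, one_mul]
    _ = (τ ^ (4 * k + 4)) ^ 3 := by rw [← pow_add, ← pow_mul]; ring_nf
    _ = s := by rw [h, mul_pow, inv_pow, hμ, inv_one, mul_one, pow_succ, hs, one_mul]

theorem mul_pow_eq_pow_three {n : ℕ} (h6 : τ ^ 6 = 1) (h : τ ^ (n + 3) = μ⁻¹) :
    μ * τ ^ n = τ ^ 3 :=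
  calc μ * τ ^ n = (τ ^ (n + 3))⁻¹ * τ ^ n := by rw [h, inv_inv]
    _ = (τ ^ 3)⁻¹ := by rw [pow_add]; group
    _ = τ ^ 3 := inv_eq_of_mul_eq_one_left (by rw [← pow_add]; exact h6)

end CommGroup

theorem laufer_fix_x0_general (k : ℕ) (s μ τ : ℂˣ)
    (hs : s ^ 2 = 1) (hμ : μ ^ 3 = 1) (hτ : τ ^ (12 * k + 6) = 1)
    (hfix : s * μ⁻¹ * τ ^ (-(4 * (k : ℤ) + 4)) = 1) :
    τ ^ 6 = 1 ∧ s = 1 ∧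
    ((τ ^ 3 = 1 ∧ μ * τ ^ (4 * k + 1) = 1 ∧ τ ^ (6 * k + 3) = 1 ∧
        s * τ ^ (6 * k + 3) = 1) ∨
     (τ ^ 3 = -1 ∧ μ * τ ^ (4 * k + 1) ≠ 1 ∧ τ ^ (6 * k + 3) ≠ 1 ∧
        s * τ ^ (6 * k + 3) ≠ 1)) := by
  have hodd : Odd (2 * k + 1) := odd_two_mul_add_one k
  have hτμ : τ ^ (4 * k + 4) = s * μ⁻¹ := by
    rw [show -(4 * (k : ℤ) + 4) = -((4 * k + 4 : ℕ) : ℤ) by push_cast; ring, zpow_neg,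
      zpow_natCast, mul_inv_eq_one] at hfix
    exact hfix.symm
  have h6 : τ ^ 6 = s := pow_six_eq_of_pow_four_mul_add_four_eq hs hμ hτ hτμ
  obtain rfl : s = 1 := eq_one_of_sq_eq_one_of_pow_eq_one_of_odd hodd hs <| by
    rw [← h6, ← pow_mul, ← hτ]; ring_nf
  rw [one_mul] at hτμ
  have hμτ : μ * τ ^ (4 * k + 1) = τ ^ 3 := mul_pow_eq_pow_three h6 hτμ
  have h63 : τ ^ (6 * k + 3) = (τ ^ 3) ^ (2 * k + 1) := by rw [← pow_mul]; ring_nf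
  refine ⟨h6, rfl, ?_⟩
  rw [hμτ, one_mul, h63]
  rcases Units.eq_one_or_eq_neg_one_of_sq_eq_one (u := τ ^ 3) (by rw [← pow_mul]; exact h6)
    with h3 | h3 <;> rw [h3]
  · simp
  · have hne : (-1 : ℂˣ) ≠ 1 := by norm_num [Units.ext_iff]
    rw [hodd.neg_one_pow]
    exact Or.inr ⟨rfl, hne, hne, hne⟩

/-- In the Laufer example, if `T(s,μ,τ)` fixes `x₀` (i.e. `s μ⁻¹ τ^{-(4k+4)} = 1`),
then `τ⁶ = 1` and `s = 1`, and either `τ³ = 1` and all of `τ³, μτ^{4k+1}, τ^{6k+3},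
sτ^{6k+3}` equal `1` (all variables fixed) or `τ³ = -1` and none equals `1`. -/
theorem laufer_fix_x0 (k : ℕ) (hk : 1 ≤ k) (s μ τ : ℂˣ)
    (hs : s ^ 2 = 1) (hμ : μ ^ 3 = 1) (hτ : τ ^ (12 * k + 6) = 1)
    (hfix : s * μ⁻¹ * τ ^ (-(4 * (k : ℤ) + 4)) = 1) :
    τ ^ 6 = 1 ∧ s = 1 ∧
    ((τ ^ 3 = 1 ∧ μ * τ ^ (4 * k + 1) = 1 ∧ τ ^ (6 * k + 3) = 1 ∧
        s * τ ^ (6 * k + 3) = 1) ∨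
     (τ ^ 3 = -1 ∧ μ * τ ^ (4 * k + 1) ≠ 1 ∧ τ ^ (6 * k + 3) ≠ 1 ∧
        s * τ ^ (6 * k + 3) ≠ 1)) :=
  laufer_fix_x0_general k s μ τ hs hμ hτ hfix
end
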